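/- Let m ≥ 1 be an integer, let U ⊆ ℝ^{n+2} be open, and let s and l be smooth functions on U satisfying Xs = (m − n/2) s, Xl = (−n/2 − m) l, Δ̃l = 0, and Δ̃s = −4m Q^{m−1} l on U. Then s satisfies the system Δ̃s = c_m Q^{m−1} Δ̃^m s and Δ̃^{m+1} s = 0 on U, where the constant c_m is defined by c_m^{-1} = (−4)^{m−1}((m−1)!)². -/

import Mathlib

open Matrix

noncomputable section

abbrev Idx (p q : ℕ) : Type := Unit ⊕ (Fin (p + q)) ⊕ Unit

/-- The diagonal quadratic form of signature `(p,q)` on `ℝ^n`, `n = p + q`. -/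
def hMat (p q : ℕ) : Matrix (Fin (p + q)) (Fin (p + q)) ℝ :=
  Matrix.diagonal fun i => if (i : ℕ) < p then (1 : ℝ) else -1

/-- The quadratic form of signature `(p+1,q+1)` on `ℝ^{n+2}`, in block form
`[[0,0,1],[0,h,0],[1,0,0]]`. -/
def htMat (p q : ℕ) : Matrix (Idx p q) (Idx p q) ℝ :=
  Matrix.of fun I J =>
    match I, J with
    | Sum.inl _, Sum.inr (Sum.inr _) => (1 : ℝ)
    | Sum.inr (Sum.inr _), Sum.inl _ => 1
    | Sum.inr (Sum.inl i), Sum.inr (Sum.inl j) => hMat p q i j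
    | _, _ => 0

/-- `Q(x) = Σ h̃_{IJ} x^I x^J`. -/
def QForm (p q : ℕ) (x : Idx p q → ℝ) : ℝ := ∑ I, ∑ J, htMat p q I J * x I * x J

/-- The partial derivative `∂_I f`. -/
def pderiv (p q : ℕ) (I : Idx p q) (f : (Idx p q → ℝ) → ℝ) : (Idx p q → ℝ) → ℝ :=
  fun x => fderiv ℝ f x (Pi.single I 1)

/-- The ambient Laplacian `Δ̃f = Σ h̃^{IJ} ∂_I ∂_J f`. -/
def laplt (p q : ℕ) (f : (Idx p q → ℝ) → ℝ) : (Idx p q → ℝ) → ℝ :=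
  fun x => ∑ I, ∑ J, (htMat p q)⁻¹ I J * pderiv p q I (pderiv p q J f) x

/-- The Euler operator `Xf = Σ x^I ∂_I f`. -/
def euler (p q : ℕ) (f : (Idx p q → ℝ) → ℝ) : (Idx p q → ℝ) → ℝ :=
  fun x => ∑ I, x I * pderiv p q I f x

/-- The null cone `N = {x ≠ 0 : Q(x) = 0}` of `h̃`. -/
def nullCone (p q : ℕ) : Set (Idx p q → ℝ) := {x | x ≠ 0 ∧ QForm p q x = 0}

/-- A function vanishes to infinite order at `y` if its value and all iterated
derivatives of every order vanish at `y`. -/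
def VanishesToInfOrderAt (p q : ℕ) (f : (Idx p q → ℝ) → ℝ) (y : Idx p q → ℝ) : Prop :=
  ∀ k : ℕ, iteratedFDeriv ℝ k f y = 0

/-- An open cone in `ℝ^{n+2} ∖ {0}`. -/
def IsOpenCone (p q : ℕ) (U : Set (Idx p q → ℝ)) : Prop :=
  IsOpen U ∧ (∀ x ∈ U, x ≠ 0) ∧ ∀ x ∈ U, ∀ l : ℝ, 0 < l → l • x ∈ U

/-- The constant `c_m` with `c_m⁻¹ = (-4)^{m-1} ((m-1)!)²`. -/
def cConst (m : ℕ) : ℝ := ((-4 : ℝ) ^ (m - 1) * ((m - 1).factorial : ℝ) ^ 2)⁻¹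


open scoped ContDiff

section Aux

lemma htMat_symm (p q : ℕ) (I J : Idx p q) : htMat p q I J = htMat p q J I := by
  rcases I with _ | (i | _) <;> rcases J with _ | (j | _) <;>
    simp [htMat, hMat, Matrix.diagonal_apply]
  rcases eq_or_ne i j with h | h
  · subst h; simp
  · simp [h, Ne.symm h]

lemma htMat_mul_self (p q : ℕ) : htMat p q * htMat p q = 1 := by
  ext I J
  rcases I with _ | (i | _) <;> rcases J with _ | (j | _) <;>
    simp [Matrix.mul_apply, htMat, hMat, Fintype.sum_sum_type, Matrix.one_apply,
      Matrix.diagonal_apply, Finset.sum_ite_eq, ite_and] <;>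
    by_cases h : i = j <;> simp [h] <;> split <;> norm_num

lemma htMat_inv (p q : ℕ) : (htMat p q)⁻¹ = htMat p q :=
  Matrix.inv_eq_right_inv (htMat_mul_self p q)

variable {p q : ℕ}

lemma one_le_inf : (1 : WithTop ℕ∞) ≤ ∞ := by exact_mod_cast le_top

lemma pderiv_congrU {U : Set (Idx p q → ℝ)} (hU : IsOpen U) {f g : (Idx p q → ℝ) → ℝ}
    (h : ∀ y ∈ U, f y = g y) {x} (hx : x ∈ U) (I : Idx p q) :
    pderiv p q I f x = pderiv p q I g x := by
  have : f =ᶠ[nhds x] g := Filter.eventuallyEq_of_mem (hU.mem_nhds hx) h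
  simp only [pderiv, this.fderiv_eq]

lemma pderiv_mul {f g : (Idx p q → ℝ) → ℝ} {x} (hf : DifferentiableAt ℝ f x)
    (hg : DifferentiableAt ℝ g x) (I : Idx p q) :
    pderiv p q I (fun y => f y * g y) x = pderiv p q I f x * g x + f x * pderiv p q I g x := by
  simp only [pderiv, fderiv_fun_mul hf hg, ContinuousLinearMap.add_apply,
    ContinuousLinearMap.smul_apply, smul_eq_mul]
  ring

lemma pderiv_const_mul {g : (Idx p q → ℝ) → ℝ} {x} (hg : DifferentiableAt ℝ g x) (c : ℝ)
    (I : Idx p q) :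
    pderiv p q I (fun y => c * g y) x = c * pderiv p q I g x := by
  simp only [pderiv, fderiv_const_mul hg c, ContinuousLinearMap.smul_apply, smul_eq_mul]

lemma pderiv_add {f g : (Idx p q → ℝ) → ℝ} {x} (hf : DifferentiableAt ℝ f x)
    (hg : DifferentiableAt ℝ g x) (I : Idx p q) :
    pderiv p q I (fun y => f y + g y) x = pderiv p q I f x + pderiv p q I g x := by
  simp only [pderiv, fderiv_fun_add hf hg, ContinuousLinearMap.add_apply]

lemma pderiv_const (c : ℝ) (x : Idx p q → ℝ) (I : Idx p q) :
    pderiv p q I (fun _ => c) x = 0 := by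
  simp [pderiv]

lemma pderiv_coord (I J : Idx p q) (x : Idx p q → ℝ) :
    pderiv p q I (fun y => y J) x = Pi.single (M := fun _ => ℝ) I 1 J := by
  have : (fun y : Idx p q → ℝ => y J) = (ContinuousLinearMap.proj (R := ℝ)
      (φ := fun _ : Idx p q => ℝ) J) := rfl
  simp only [pderiv, this, ContinuousLinearMap.fderiv, ContinuousLinearMap.proj_apply]

lemma pderiv_sum {ι : Type*} (t : Finset ι) {f : ι → (Idx p q → ℝ) → ℝ} {x}
    (hf : ∀ i ∈ t, DifferentiableAt ℝ (f i) x) (I : Idx p q) :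
    pderiv p q I (fun y => ∑ i ∈ t, f i y) x = ∑ i ∈ t, pderiv p q I (f i) x := by
  simp only [pderiv, fderiv_fun_sum hf, ContinuousLinearMap.sum_apply]

lemma pderiv_pow {f : (Idx p q → ℝ) → ℝ} {x} (hf : DifferentiableAt ℝ f x) (I : Idx p q) :
    ∀ k : ℕ, pderiv p q I (fun y => f y ^ k) x = (k : ℝ) * f x ^ (k - 1) * pderiv p q I f x
  | 0 => by simp [pderiv_const]
  | (k+1) => by
    have h1 : pderiv p q I (fun y => f y * f y ^ k) x
        = pderiv p q I f x * f x ^ k + f x * pderiv p q I (fun y => f y ^ k) x :=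
      pderiv_mul hf (hf.pow k) I
    have h2 := pderiv_pow hf I k
    simp only [pow_succ']
    rw [h1, h2]
    rcases k with _ | k
    · push_cast; simp
    · simp only [Nat.add_sub_cancel]
      push_cast
      ring

lemma contDiff_QForm : ContDiff ℝ ∞ (QForm p q) := by
  unfold QForm
  refine ContDiff.sum fun I _ => ContDiff.sum fun J _ => ContDiff.mul (ContDiff.mul ?_ ?_) ?_
  · exact contDiff_const
  · exact (ContinuousLinearMap.proj (R := ℝ) (φ := fun _ : Idx p q => ℝ) I).contDiff
  · exact (ContinuousLinearMap.proj (R := ℝ) (φ := fun _ : Idx p q => ℝ) J).contDiff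

lemma diffAt_QForm (x : Idx p q → ℝ) : DifferentiableAt ℝ (QForm p q) x :=
  contDiff_QForm.differentiable (by simp) |>.differentiableAt

lemma pderiv_QForm (K : Idx p q) (x : Idx p q → ℝ) :
    pderiv p q K (QForm p q) x = 2 * (htMat p q *ᵥ x) K := by
  have hcoord : ∀ (J : Idx p q), DifferentiableAt ℝ (fun y : Idx p q → ℝ => y J) x :=
    fun J => (ContinuousLinearMap.proj (R := ℝ) (φ := fun _ : Idx p q => ℝ) J).differentiableAt
  have step : ∀ (I J : Idx p q), pderiv p q K (fun y => htMat p q I J * y I * y J) x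
      = htMat p q I J * ((Pi.single (M := fun _ => ℝ) K 1 I) * x J
        + x I * (Pi.single (M := fun _ => ℝ) K 1 J)) := by
    intro I J
    have : (fun y : Idx p q → ℝ => htMat p q I J * y I * y J)
        = fun y => htMat p q I J * (y I * y J) := by funext y; ring
    rw [this, pderiv_const_mul (g := fun y => y I * y J) ((hcoord I).mul (hcoord J)) _ K,
      pderiv_mul (hcoord I) (hcoord J) K, pderiv_coord, pderiv_coord]
  have hdiff : ∀ (I J : Idx p q),
      DifferentiableAt ℝ (fun y : Idx p q → ℝ => htMat p q I J * y I * y J) x := by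
    intro I J
    exact ((differentiableAt_const _).mul (hcoord I)).mul (hcoord J)
  unfold QForm
  rw [pderiv_sum _ (fun I _ => DifferentiableAt.fun_sum fun J _ => hdiff I J) K]
  have : ∀ I, pderiv p q K (fun y => ∑ J, htMat p q I J * y I * y J) x
      = ∑ J, pderiv p q K (fun y => htMat p q I J * y I * y J) x :=
    fun I => pderiv_sum _ (fun J _ => hdiff I J) K
  simp only [this, step]
  rw [Matrix.mulVec]
  simp only [dotProduct, mul_add, Finset.sum_add_distrib]
  have e1 : ∑ I, ∑ J, htMat p q I J * (Pi.single (M := fun _ => ℝ) K 1 I * x J)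
      = ∑ J, htMat p q K J * x J := by
    rw [Finset.sum_eq_single K]
    · simp
    · intro b _ hb
      simp [Pi.single_eq_of_ne hb]
    · simp
  have e2 : ∑ I, ∑ J, htMat p q I J * (x I * Pi.single (M := fun _ => ℝ) K 1 J)
      = ∑ I, htMat p q K I * x I := by
    have : ∀ I : Idx p q, ∑ J, htMat p q I J * (x I * Pi.single (M := fun _ => ℝ) K 1 J)
        = htMat p q I K * x I := by
      intro I
      rw [Finset.sum_eq_single K]
      · simp
      · intro b _ hb
        simp [Pi.single_eq_of_ne hb]
      · simp
    simp only [this]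
    exact Finset.sum_congr rfl fun I _ => by rw [htMat_symm]
  rw [e1, e2]
  ring

lemma mulVec_htMat_htMat (x : Idx p q → ℝ) : htMat p q *ᵥ (htMat p q *ᵥ x) = x := by
  rw [Matrix.mulVec_mulVec, htMat_mul_self, Matrix.one_mulVec]

lemma sum_htMat_mulVec (J : Idx p q) (x : Idx p q → ℝ) :
    ∑ I, htMat p q I J * (htMat p q *ᵥ x) I = x J := by
  have : ∑ I, htMat p q I J * (htMat p q *ᵥ x) I
      = (htMat p q *ᵥ (htMat p q *ᵥ x)) J := by
    rw [Matrix.mulVec, dotProduct]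
    exact Finset.sum_congr rfl fun I _ => by rw [htMat_symm]
  rw [this, mulVec_htMat_htMat]

lemma QForm_eq_sum (x : Idx p q → ℝ) : QForm p q x = ∑ I, x I * (htMat p q *ᵥ x) I := by
  unfold QForm
  simp only [Matrix.mulVec, dotProduct, Finset.mul_sum]
  exact Finset.sum_congr rfl fun I _ => Finset.sum_congr rfl fun J _ => by ring

lemma sum_AxAx (x : Idx p q → ℝ) :
    ∑ I, ∑ J, htMat p q I J * (htMat p q *ᵥ x) I * (htMat p q *ᵥ x) J = QForm p q x := by
  rw [QForm_eq_sum, Finset.sum_comm]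
  refine Finset.sum_congr rfl fun J _ => ?_
  conv_rhs => rw [← sum_htMat_mulVec J x]
  rw [Finset.sum_mul]

lemma trace_htMat_sq : ∑ I, ∑ J, htMat p q I J * htMat p q J I = ((p : ℝ) + q + 2) := by
  have : ∀ I : Idx p q, ∑ J, htMat p q I J * htMat p q J I = (htMat p q * htMat p q) I I :=
    fun I => (Matrix.mul_apply).symm
  simp only [this, htMat_mul_self, Matrix.one_apply_eq]
  simp [Finset.card_univ]
  ring

lemma contDiffOn_pderiv {U : Set (Idx p q → ℝ)} (hU : IsOpen U) {f : (Idx p q → ℝ) → ℝ} (hf : ContDiffOn ℝ ∞ f U)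
    (I : Idx p q) : ContDiffOn ℝ ∞ (pderiv p q I f) U := by
  have h1 : ContDiffOn ℝ ∞ (fderiv ℝ f) U :=
    hf.fderiv_of_isOpen hU (le_of_eq (show (∞ : WithTop ℕ∞) + 1 = ∞ from rfl))
  exact h1.clm_apply contDiffOn_const

lemma diffAt_of_contDiffOn {U : Set (Idx p q → ℝ)} (hU : IsOpen U) {f : (Idx p q → ℝ) → ℝ}
    (hf : ContDiffOn ℝ ∞ f U) {x} (hx : x ∈ U) : DifferentiableAt ℝ f x := by
  have hd : DifferentiableOn ℝ f U := hf.differentiableOn (by simp)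
  exact hd.differentiableAt (hU.mem_nhds hx)

lemma laplt_eq (f : (Idx p q → ℝ) → ℝ) (x : Idx p q → ℝ) :
    laplt p q f x = ∑ I, ∑ J, htMat p q I J * pderiv p q I (pderiv p q J f) x := by
  simp only [laplt, htMat_inv]

lemma laplt_congrU {U : Set (Idx p q → ℝ)} (hU : IsOpen U) {f g : (Idx p q → ℝ) → ℝ}
    (h : ∀ y ∈ U, f y = g y) {x} (hx : x ∈ U) : laplt p q f x = laplt p q g x := by
  unfold laplt
  refine Finset.sum_congr rfl fun I _ => Finset.sum_congr rfl fun J _ => ?_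
  have h1 : ∀ y ∈ U, pderiv p q J f y = pderiv p q J g y :=
    fun y hy => pderiv_congrU hU h hy J
  rw [pderiv_congrU hU h1 hx I]

lemma laplt_mul {U : Set (Idx p q → ℝ)} (hU : IsOpen U) {f g : (Idx p q → ℝ) → ℝ}
    (hf : ContDiffOn ℝ ∞ f U) (hg : ContDiffOn ℝ ∞ g U) {x} (hx : x ∈ U) :
    laplt p q (fun y => f y * g y) x = laplt p q f x * g x
      + 2 * (∑ I, ∑ J, htMat p q I J * pderiv p q I f x * pderiv p q J g x)
      + f x * laplt p q g x := by
  have hfd : ∀ y ∈ U, DifferentiableAt ℝ f y := fun y hy => diffAt_of_contDiffOn hU hf hy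
  have hgd : ∀ y ∈ U, DifferentiableAt ℝ g y := fun y hy => diffAt_of_contDiffOn hU hg hy
  have hfd' : ∀ (J : Idx p q) y, y ∈ U → DifferentiableAt ℝ (pderiv p q J f) y :=
    fun J y hy => diffAt_of_contDiffOn hU (contDiffOn_pderiv hU hf J) hy
  have hgd' : ∀ (J : Idx p q) y, y ∈ U → DifferentiableAt ℝ (pderiv p q J g) y :=
    fun J y hy => diffAt_of_contDiffOn hU (contDiffOn_pderiv hU hg J) hy
  have step1 : ∀ (J : Idx p q), ∀ y ∈ U, pderiv p q J (fun z => f z * g z) y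
      = pderiv p q J f y * g y + f y * pderiv p q J g y :=
    fun J y hy => pderiv_mul (hfd y hy) (hgd y hy) J
  have step2 : ∀ (I J : Idx p q), pderiv p q I (pderiv p q J (fun z => f z * g z)) x
      = pderiv p q I (pderiv p q J f) x * g x + pderiv p q J f x * pderiv p q I g x
        + (pderiv p q I f x * pderiv p q J g x + f x * pderiv p q I (pderiv p q J g) x) := by
    intro I J
    rw [pderiv_congrU hU (step1 J) hx I,
      pderiv_add (f := fun y => pderiv p q J f y * g y) (g := fun y => f y * pderiv p q J g y)
        ((hfd' J x hx).mul (hgd x hx)) ((hfd x hx).mul (hgd' J x hx)) I,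
      pderiv_mul (hfd' J x hx) (hgd x hx) I, pderiv_mul (hfd x hx) (hgd' J x hx) I]
  rw [laplt_eq]
  simp only [step2, mul_add, Finset.sum_add_distrib]
  have t1 : ∑ I, ∑ J, htMat p q I J * (pderiv p q I (pderiv p q J f) x * g x)
      = laplt p q f x * g x := by
    rw [laplt_eq, Finset.sum_mul]
    refine Finset.sum_congr rfl fun I _ => ?_
    rw [Finset.sum_mul]
    exact Finset.sum_congr rfl fun J _ => by ring
  have t4 : ∑ I, ∑ J, htMat p q I J * (f x * pderiv p q I (pderiv p q J g) x)
      = f x * laplt p q g x := by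
    rw [laplt_eq, Finset.mul_sum]
    refine Finset.sum_congr rfl fun I _ => ?_
    rw [Finset.mul_sum]
    exact Finset.sum_congr rfl fun J _ => by ring
  have t3 : ∑ I, ∑ J, htMat p q I J * (pderiv p q I f x * pderiv p q J g x)
      = ∑ I, ∑ J, htMat p q I J * pderiv p q I f x * pderiv p q J g x :=
    Finset.sum_congr rfl fun I _ => Finset.sum_congr rfl fun J _ => by ring
  have t2 : ∑ I, ∑ J, htMat p q I J * (pderiv p q J f x * pderiv p q I g x)
      = ∑ I, ∑ J, htMat p q I J * pderiv p q I f x * pderiv p q J g x := by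
    rw [Finset.sum_comm]
    exact Finset.sum_congr rfl fun I _ => Finset.sum_congr rfl fun J _ => by
      rw [htMat_symm]; ring
  rw [t1, t2, t3, t4]
  ring

lemma laplt_const (c : ℝ) (x : Idx p q → ℝ) : laplt p q (fun _ => c) x = 0 := by
  rw [laplt_eq]
  refine Finset.sum_eq_zero fun I _ => Finset.sum_eq_zero fun J _ => ?_
  have h1 : pderiv p q J (fun _ : Idx p q → ℝ => c) = fun _ => (0 : ℝ) := by
    funext y; exact pderiv_const c y J
  rw [h1, pderiv_const 0 x I, mul_zero]

lemma laplt_const_mul {U : Set (Idx p q → ℝ)} (hU : IsOpen U) {g : (Idx p q → ℝ) → ℝ}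
    (hg : ContDiffOn ℝ ∞ g U) (c : ℝ) {x} (hx : x ∈ U) :
    laplt p q (fun y => c * g y) x = c * laplt p q g x := by
  have h := laplt_mul (f := fun _ => c) hU contDiffOn_const hg hx
  simp only [pderiv_const, zero_mul, mul_zero, Finset.sum_const_zero, add_zero, zero_add] at h
  rw [h, laplt_const, zero_mul, zero_add]

lemma diffAt_mulVec (J : Idx p q) (x : Idx p q → ℝ) :
    DifferentiableAt ℝ (fun y : Idx p q → ℝ => (htMat p q *ᵥ y) J) x := by
  have : (fun y : Idx p q → ℝ => (htMat p q *ᵥ y) J)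
      = fun y => ∑ K, htMat p q J K * y K := by
    funext y; rw [Matrix.mulVec, dotProduct]
  rw [this]
  exact DifferentiableAt.fun_sum fun K _ => (differentiableAt_const _).mul
    ((ContinuousLinearMap.proj (R := ℝ) (φ := fun _ : Idx p q => ℝ) K).differentiableAt)

lemma pderiv_mulVec (I J : Idx p q) (x : Idx p q → ℝ) :
    pderiv p q I (fun y : Idx p q → ℝ => (htMat p q *ᵥ y) J) x = htMat p q J I := by
  have h0 : (fun y : Idx p q → ℝ => (htMat p q *ᵥ y) J)
      = fun y => ∑ K, htMat p q J K * y K := by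
    funext y; rw [Matrix.mulVec, dotProduct]
  have hcoord : ∀ (K : Idx p q), DifferentiableAt ℝ (fun y : Idx p q → ℝ => y K) x :=
    fun K => (ContinuousLinearMap.proj (R := ℝ) (φ := fun _ : Idx p q => ℝ) K).differentiableAt
  rw [h0, pderiv_sum (f := fun K y => htMat p q J K * y K) _ (fun K _ => (differentiableAt_const _).mul (hcoord K)) I]
  have : ∀ K : Idx p q, pderiv p q I (fun y => htMat p q J K * y K) x
      = htMat p q J K * Pi.single (M := fun _ => ℝ) I 1 K := by
    intro K
    rw [pderiv_const_mul (hcoord K) _ I, pderiv_coord]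
  simp only [this]
  rw [Finset.sum_eq_single I]
  · simp
  · intro b _ hb; simp [Pi.single_eq_of_ne hb]
  · simp

lemma diffAt_Qpow (j : ℕ) (x : Idx p q → ℝ) :
    DifferentiableAt ℝ (fun y => QForm p q y ^ j) x := (diffAt_QForm x).pow j

lemma pderiv_Qpow (j : ℕ) (K : Idx p q) (x : Idx p q → ℝ) :
    pderiv p q K (fun y => QForm p q y ^ j) x
      = 2 * (j : ℝ) * QForm p q x ^ (j - 1) * (htMat p q *ᵥ x) K := by
  rw [pderiv_pow (diffAt_QForm x) K j, pderiv_QForm]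
  ring

lemma laplt_Qpow {j : ℕ} (hj : 1 ≤ j) (x : Idx p q → ℝ) :
    laplt p q (fun y => QForm p q y ^ j) x
      = 2 * (j : ℝ) * (2 * (j : ℝ) + ((p : ℝ) + q)) * QForm p q x ^ (j - 1) := by
  have hJ : ∀ J : Idx p q, pderiv p q J (fun y => QForm p q y ^ j)
      = fun y => (2 * (j : ℝ)) * (QForm p q y ^ (j - 1) * (htMat p q *ᵥ y) J) := by
    intro J; funext y; rw [pderiv_Qpow]; ring
  have hIJ : ∀ I J : Idx p q,
      pderiv p q I (pderiv p q J (fun y => QForm p q y ^ j)) x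
        = (2 * (j : ℝ)) * (((j : ℝ) - 1) * QForm p q x ^ (j - 1 - 1)
            * (2 * (htMat p q *ᵥ x) I) * (htMat p q *ᵥ x) J
          + QForm p q x ^ (j - 1) * htMat p q J I) := by
    intro I J
    rw [hJ J, pderiv_const_mul (g := fun y => QForm p q y ^ (j - 1) * (htMat p q *ᵥ y) J)
        ((diffAt_Qpow (j-1) x).mul (diffAt_mulVec J x)) _ I,
      pderiv_mul (diffAt_Qpow (j-1) x) (diffAt_mulVec J x) I,
      pderiv_pow (diffAt_QForm x) I (j-1), pderiv_QForm, pderiv_mulVec]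
    have hc : ((j - 1 : ℕ) : ℝ) = (j : ℝ) - 1 := by
      have := Nat.cast_sub hj (R := ℝ); simpa using this
    rw [hc]
  rw [laplt_eq]
  have key : ∀ I J : Idx p q, htMat p q I J * pderiv p q I (pderiv p q J
        (fun y => QForm p q y ^ j)) x
      = (4 * (j : ℝ) * ((j : ℝ) - 1) * QForm p q x ^ (j - 1 - 1))
          * (htMat p q I J * (htMat p q *ᵥ x) I * (htMat p q *ᵥ x) J)
        + (2 * (j : ℝ) * QForm p q x ^ (j - 1)) * (htMat p q I J * htMat p q J I) := by
    intro I J; rw [hIJ I J]; ring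
  simp only [key, Finset.sum_add_distrib, ← Finset.mul_sum, sum_AxAx, trace_htMat_sq]
  obtain ⟨k, rfl⟩ : ∃ k, j = k + 1 := ⟨j - 1, by omega⟩
  rcases k with _ | k
  · norm_num
    try ring
  · simp only [Nat.add_sub_cancel]
    push_cast
    ring

lemma laplt_Qpow_mul {U : Set (Idx p q → ℝ)} (hU : IsOpen U) {l : (Idx p q → ℝ) → ℝ}
    (hl : ContDiffOn ℝ ∞ l U) {m : ℕ}
    (hlhom : ∀ x ∈ U, euler p q l x = (-(p + q : ℝ) / 2 - (m : ℝ)) * l x)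
    (hlharm : ∀ x ∈ U, laplt p q l x = 0)
    {j : ℕ} (hj : 1 ≤ j) {x} (hx : x ∈ U) :
    laplt p q (fun y => QForm p q y ^ j * l y) x
      = (4 * (j : ℝ) * ((j : ℝ) - (m : ℝ))) * (QForm p q x ^ (j - 1) * l x) := by
  have hQj : ContDiffOn ℝ ∞ (fun y => QForm p q y ^ j) U :=
    (contDiff_QForm.pow j).contDiffOn
  rw [laplt_mul hU hQj hl hx]
  have hcross : ∑ I, ∑ J, htMat p q I J * pderiv p q I (fun y => QForm p q y ^ j) x
        * pderiv p q J l x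
      = 2 * (j : ℝ) * QForm p q x ^ (j - 1) * euler p q l x := by
    rw [Finset.sum_comm, euler, Finset.mul_sum]
    refine Finset.sum_congr rfl fun J _ => ?_
    have h1 : ∀ I : Idx p q, htMat p q I J * pderiv p q I (fun y => QForm p q y ^ j) x
          * pderiv p q J l x
        = (2 * (j : ℝ) * QForm p q x ^ (j - 1) * pderiv p q J l x)
          * (htMat p q I J * (htMat p q *ᵥ x) I) := by
      intro I; rw [pderiv_Qpow]; ring
    simp only [h1, ← Finset.mul_sum, sum_htMat_mulVec]
    ring
  rw [hcross, laplt_Qpow hj, hlhom x hx, hlharm x hx]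
  push_cast
  ring

/-- the coefficient sequence: `laplt^[k+1] s = CkSeq m k * Q^(m-1-k) * l`. -/

def CkSeq (m : ℕ) : ℕ → ℝ
  | 0 => -4 * m
  | (k+1) => (-4 * ((k : ℝ) + 1) * ((m : ℝ) - ((k : ℝ) + 1))) * CkSeq m k

lemma prod_desc : ∀ k : ℕ, ∏ i ∈ Finset.range k, ((k : ℝ) - i) = (k.factorial : ℝ)
  | 0 => by simp
  | (k+1) => by
    rw [Finset.prod_range_succ']
    have h1 : (∏ i ∈ Finset.range k, (((k+1 : ℕ) : ℝ) - ((i + 1 : ℕ) : ℝ)))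
        = ∏ i ∈ Finset.range k, ((k : ℝ) - i) :=
      Finset.prod_congr rfl fun i _ => by push_cast; ring
    rw [h1, prod_desc k, Nat.factorial_succ]
    push_cast
    ring

lemma CkSeq_eq (m : ℕ) : ∀ k, k ≤ m - 1 →
    CkSeq m k = -4 * m * (-4 : ℝ) ^ k * (k.factorial : ℝ)
      * ∏ i ∈ Finset.range k, ((m : ℝ) - 1 - i)
  | 0, _ => by simp [CkSeq]
  | (k+1), h => by
    rw [CkSeq, CkSeq_eq m k (by omega), Finset.prod_range_succ, Nat.factorial_succ]
    set P := ∏ i ∈ Finset.range k, ((m : ℝ) - 1 - i) with hP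
    push_cast
    ring

lemma CkSeq_final (m : ℕ) (hm : 1 ≤ m) :
    CkSeq m (m-1) = -4 * m * ((-4 : ℝ) ^ (m-1) * ((m-1).factorial : ℝ) ^ 2) := by
  rw [CkSeq_eq m (m-1) le_rfl]
  have h2 : ∏ i ∈ Finset.range (m-1), ((m : ℝ) - 1 - i)
      = ∏ i ∈ Finset.range (m-1), (((m-1 : ℕ) : ℝ) - i) :=
    Finset.prod_congr rfl fun i _ => by
      rw [Nat.cast_sub hm]; push_cast; ring
  rw [h2, prod_desc (m-1)]
  ring

end Aux

/-- If `s` is homogeneous of degree `m - n/2`, `l` is harmonic and homogeneous of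
degree `-n/2 - m`, and `Δ̃s = -4m Q^{m-1} l`, then `s` satisfies the system
`Δ̃s = c_m Q^{m-1} Δ̃^m s` and `Δ̃^{m+1} s = 0`. -/
theorem statement13 (p q : ℕ) (hn : 3 ≤ p + q)
    (m : ℕ) (hm : 1 ≤ m)
    (U : Set (Idx p q → ℝ)) (hU : IsOpen U)
    (s l : (Idx p q → ℝ) → ℝ)
    (hs : ContDiffOn ℝ (⊤ : ℕ∞) s U) (hl : ContDiffOn ℝ (⊤ : ℕ∞) l U)
    (hshom : ∀ x ∈ U, euler p q s x = ((m : ℝ) - (p + q : ℝ) / 2) * s x)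
    (hlhom : ∀ x ∈ U, euler p q l x = (-(p + q : ℝ) / 2 - (m : ℝ)) * l x)
    (hlharm : ∀ x ∈ U, laplt p q l x = 0)
    (hls : ∀ x ∈ U, laplt p q s x = -4 * (m : ℝ) * QForm p q x ^ (m - 1) * l x) :
    ∀ x ∈ U,
      laplt p q s x = cConst m * QForm p q x ^ (m - 1) * ((laplt p q)^[m] s) x ∧
      ((laplt p q)^[m + 1] s) x = 0 := by
  have hl' : ContDiffOn ℝ ∞ l U := hl.of_le (by simp)
  have main : ∀ k : ℕ, k ≤ m - 1 → ∀ x ∈ U,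
      (laplt p q)^[k+1] s x = CkSeq m k * (QForm p q x ^ (m-1-k) * l x) := by
    intro k
    induction k with
    | zero =>
      intro _ x hx
      rw [Function.iterate_one, hls x hx]
      simp only [CkSeq, Nat.sub_zero]
      ring
    | succ k ih =>
      intro hk x hx
      rw [Function.iterate_succ_apply', laplt_congrU hU (ih (by omega)) hx,
        laplt_const_mul hU (((contDiff_QForm.pow (m-1-k)).contDiffOn).mul hl') _ hx,
        laplt_Qpow_mul hU hl' hlhom hlharm (j := m-1-k) (by omega) hx]
      show CkSeq m k * (4 * ((m-1-k : ℕ) : ℝ) * (((m-1-k : ℕ) : ℝ) - (m : ℝ))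
          * (QForm p q x ^ (m-1-k-1) * l x)) = _
      rw [CkSeq]
      have hexp : m - 1 - k - 1 = m - 1 - (k+1) := by omega
      have hcast : ((m - 1 - k : ℕ) : ℝ) = (m : ℝ) - 1 - (k : ℝ) := by
        rw [show m - 1 - k = m - (1 + k) by omega, Nat.cast_sub (by omega)]
        push_cast; ring
      rw [hexp, hcast]
      push_cast
      ring
  intro x hx
  have hfin := main (m-1) le_rfl x hx
  rw [show m - 1 + 1 = m by omega, Nat.sub_self, pow_zero, one_mul] at hfin
  have hD : ((-4 : ℝ) ^ (m - 1) * ((m - 1).factorial : ℝ) ^ 2) ≠ 0 := by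
    refine mul_ne_zero (pow_ne_zero _ (by norm_num)) (pow_ne_zero _ ?_)
    exact_mod_cast Nat.factorial_ne_zero (m-1)
  constructor
  · rw [hls x hx, hfin, CkSeq_final m hm, cConst]
    field_simp
  · rw [Function.iterate_succ_apply']
    have hcong : ∀ y ∈ U, (laplt p q)^[m] s y = CkSeq m (m-1) * l y := by
      intro y hy
      have := main (m-1) le_rfl y hy
      rw [show m - 1 + 1 = m by omega, Nat.sub_self, pow_zero, one_mul] at this
      exact this
    rw [laplt_congrU hU hcong hx, laplt_const_mul hU hl' _ hx, hlharm x hx, mul_zero]
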